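/- arXiv:2406.05526 — 2 statements merged into one kernel-verified Lean document; each statement's English description precedes it below -/
import Mathlib

section
/- Reduction in policy space: assume there exist an optimal policy pair (u*,p*) ∈ S for the objective J_σ (i.e. J_σ(u*,p*) ≥ J_σ(u,p) for all (u,p) ∈ S) and a constant η > 0 such that η ≤ u*(t) ≤ α(t)/(2aβ(t)) − η and η ≤ p*(t) ≤ α(t)/β(t) − η for all t ∈ [0,T]. Then p*(t) = a·u*(t) + α(t)/(2β(t)) for Lebesgue-almost every t ∈ [0,T]. -/
open MeasureTheory Set
open scoped NNReal

noncomputable section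

/-- Combined holding/shortage cost with holding factor `Ch` and shortage factor `Cs`. -/
def holding (Ch Cs x : ℝ) : ℝ := if x < 0 then Cs * x ^ 2 else Ch * x ^ 2

/-- Membership in the policy space `S`. -/
def memS (T a : ℝ) (α β : ℝ → ℝ) (u p : ℝ → ℝ) : Prop :=
  Measurable u ∧ Measurable p ∧
  ∀ t ∈ Icc (0 : ℝ) T,
    0 ≤ u t ∧ u t ≤ α t / (2 * a * β t) ∧ 0 ≤ p t ∧ p t ≤ α t / β t

/-- Inventory trajectory under production rate `u` and price `p`. -/
def traj (α β : ℝ → ℝ) (x₀ : ℝ) (u p : ℝ → ℝ) (t : ℝ) : ℝ :=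
  x₀ + ∫ s in (0 : ℝ)..t, (u s - max (α s - β s * p s) 0)

/-- The objective `J_σ(u,p)`. -/
def Jobj (T a σ Ch Cs ChT CsT : ℝ) (α β : ℝ → ℝ) (x₀ : ℝ) (u p : ℝ → ℝ) : ℝ :=
  (∫ s in (0 : ℝ)..T,
    (p s * max (α s - β s * p s) 0 - a * u s ^ 2 - holding Ch Cs (traj α β x₀ u p s)))
  - holding ChT CsT (traj α β x₀ u p T)
  - σ * sSup (traj α β x₀ u p '' Icc 0 T)

lemma continuous_holding (Ch Cs : ℝ) : Continuous (holding Ch Cs) := by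
  have : (holding Ch Cs) = fun x : ℝ => if x ≤ 0 then Cs * x ^ 2 else Ch * x ^ 2 := by
    funext x
    rcases lt_trichotomy x 0 with h | h | h
    · simp [holding, h, h.le]
    · simp [holding, h]
    · simp [holding, not_lt.2 h.le, not_le.2 h]
  rw [this]
  exact Continuous.if_le (by continuity) (by continuity) continuous_id continuous_const
    (by intro x hx; simp [hx])

lemma integrableOn_of_bounded_meas {f : ℝ → ℝ} {s : Set ℝ} (hs : MeasurableSet s)
    (hμ : volume s < ⊤) (hf : AEStronglyMeasurable f (volume.restrict s)) {C : ℝ}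
    (hC : ∀ x ∈ s, |f x| ≤ C) : IntegrableOn f s := by
  refine Integrable.mono' (g := fun _ => C) ?_ hf ?_
  · exact (integrableOn_const_iff).2 (Or.inr hμ)
  · exact (ae_restrict_iff' hs).2 (ae_of_all _ fun x hx => by simpa using hC x hx)

set_option maxHeartbeats 2000000 in
set_option maxHeartbeats 2000000 in
/-- reduction in policy space: an interior optimal policy pair
`(u*, p*)` satisfies `p*(t) = a u*(t) + α(t)/(2β(t))` for a.e. `t ∈ [0,T]`. -/
theorem optimal_policy_reduction
    (T a σ Ch Cs ChT CsT : ℝ)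
    (hT : 0 < T) (ha : 0 < a) (hσ : 0 ≤ σ)
    (hCh : 0 < Ch) (hCs : 0 < Cs) (hChT : 0 < ChT) (hCsT : 0 < CsT)
    (α β : ℝ → ℝ)
    (hαLip : ∃ K : ℝ≥0, LipschitzOnWith K α (Icc 0 T))
    (hβLip : ∃ K : ℝ≥0, LipschitzOnWith K β (Icc 0 T))
    (hα : ∀ t ∈ Icc (0 : ℝ) T, 0 < α t) (hβ : ∀ t ∈ Icc (0 : ℝ) T, 0 < β t)
    (x₀ : ℝ) (ustar pstar : ℝ → ℝ)
    (hmem : memS T a α β ustar pstar)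
    (hint : ∃ η > (0 : ℝ), ∀ t ∈ Icc (0 : ℝ) T,
      η ≤ ustar t ∧ ustar t ≤ α t / (2 * a * β t) - η ∧
      η ≤ pstar t ∧ pstar t ≤ α t / β t - η)
    (hopt : ∀ u p : ℝ → ℝ, memS T a α β u p →
      Jobj T a σ Ch Cs ChT CsT α β x₀ u p ≤ Jobj T a σ Ch Cs ChT CsT α β x₀ ustar pstar) :
    ∀ᵐ t ∂(volume.restrict (Icc (0 : ℝ) T)),
      pstar t = a * ustar t + α t / (2 * β t) := by
  classical
  obtain ⟨Kα, hKα⟩ := hαLip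
  obtain ⟨Kβ, hKβ⟩ := hβLip
  obtain ⟨η, hη, hintt⟩ := hint
  obtain ⟨hu_meas, hp_meas, hbounds⟩ := hmem
  have hIccne : (Icc (0:ℝ) T).Nonempty := nonempty_Icc.2 hT.le
  -- continuous extensions of α, β
  obtain ⟨proj, hprojdef⟩ : ∃ f : ℝ → ℝ, f = fun t => max 0 (min t T) := ⟨_, rfl⟩
  have hprojmem : ∀ t, proj t ∈ Icc (0:ℝ) T := fun t => by
    rw [hprojdef]
    exact ⟨le_max_left _ _, max_le hT.le (min_le_right _ _)⟩
  have hprojcont : Continuous proj := by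
    rw [hprojdef]
    exact continuous_const.max (continuous_id.min continuous_const)
  have hprojid : ∀ t ∈ Icc (0:ℝ) T, proj t = t := by
    intro t ht
    simp only [hprojdef]
    rw [min_eq_left ht.2, max_eq_right ht.1]
  obtain ⟨αc, hαcdef⟩ : ∃ f : ℝ → ℝ, f = fun t => α (proj t) := ⟨_, rfl⟩
  obtain ⟨βc, hβcdef⟩ : ∃ f : ℝ → ℝ, f = fun t => β (proj t) := ⟨_, rfl⟩
  have hαc_cont : Continuous αc := by
    rw [hαcdef]; exact hKα.continuousOn.comp_continuous hprojcont hprojmem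
  have hβc_cont : Continuous βc := by
    rw [hβcdef]; exact hKβ.continuousOn.comp_continuous hprojcont hprojmem
  have hαc_eq : ∀ t ∈ Icc (0:ℝ) T, αc t = α t := fun t ht => by
    simp only [hαcdef]; rw [hprojid t ht]
  have hβc_eq : ∀ t ∈ Icc (0:ℝ) T, βc t = β t := fun t ht => by
    simp only [hβcdef]; rw [hprojid t ht]
  -- min of β, max of α
  obtain ⟨t₀, ht₀, hmin⟩ := isCompact_Icc.exists_isMinOn hIccne hKβ.continuousOn
  obtain ⟨m, hmdef⟩ : ∃ x : ℝ, x = β t₀ := ⟨_, rfl⟩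
  have hm_pos : 0 < m := by rw [hmdef]; exact hβ t₀ ht₀
  have hβ_ge : ∀ t ∈ Icc (0:ℝ) T, m ≤ β t := fun t ht => by rw [hmdef]; exact hmin ht
  have hβc_ge : ∀ t, m ≤ βc t := fun t => by
    rw [hmdef, hβcdef]; exact hmin (hprojmem t)
  obtain ⟨t₁, ht₁, hmax⟩ := isCompact_Icc.exists_isMaxOn hIccne hKα.continuousOn
  obtain ⟨A, hAdef⟩ : ∃ x : ℝ, x = α t₁ := ⟨_, rfl⟩
  have hA_pos : 0 < A := by rw [hAdef]; exact hα t₁ ht₁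
  have hα_le : ∀ t ∈ Icc (0:ℝ) T, α t ≤ A := fun t ht => by rw [hAdef]; exact hmax ht
  -- constants
  obtain ⟨Cp, hCp⟩ : ∃ x : ℝ, x = A / m := ⟨_, rfl⟩
  obtain ⟨Cu, hCu⟩ : ∃ x : ℝ, x = A / (2 * a * m) := ⟨_, rfl⟩
  have hCp_pos : 0 < Cp := by rw [hCp]; exact div_pos hA_pos hm_pos
  have hCu_pos : 0 < Cu := by
    rw [hCu]; exact div_pos hA_pos (by positivity)
  have hp_bdd : ∀ t ∈ Icc (0:ℝ) T, 0 ≤ pstar t ∧ pstar t ≤ Cp := by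
    intro t ht
    obtain ⟨h1, h2, h3, h4⟩ := hbounds t ht
    refine ⟨h3, h4.trans ?_⟩
    rw [hCp]
    exact div_le_div₀ hA_pos.le (hα_le t ht) hm_pos (hβ_ge t ht)
  have hu_bdd : ∀ t ∈ Icc (0:ℝ) T, 0 ≤ ustar t ∧ ustar t ≤ Cu := by
    intro t ht
    obtain ⟨h1, h2, h3, h4⟩ := hbounds t ht
    refine ⟨h1, h2.trans ?_⟩
    have hβt := hβ t ht
    rw [hCu]
    refine div_le_div₀ hA_pos.le (hα_le t ht) (by positivity) ?_
    have : m ≤ β t := hβ_ge t ht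
    nlinarith
  have hratio_bdd : ∀ t ∈ Icc (0:ℝ) T, 0 ≤ α t / β t ∧ α t / β t ≤ Cp := by
    intro t ht
    refine ⟨le_of_lt (div_pos (hα t ht) (hβ t ht)), ?_⟩
    rw [hCp]
    exact div_le_div₀ hA_pos.le (hα_le t ht) hm_pos (hβ_ge t ht)
  -- demand (measurable version), g, q
  obtain ⟨d, hddef⟩ : ∃ f : ℝ → ℝ, f = fun s => αc s - βc s * pstar s := ⟨_, rfl⟩
  have hd_apply : ∀ s, d s = αc s - βc s * pstar s := fun s => by rw [hddef]
  have hd_eq : ∀ s ∈ Icc (0:ℝ) T, α s - β s * pstar s = d s := by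
    intro s hs; simp only [hddef]; rw [hαc_eq s hs, hβc_eq s hs]
  have hd_lb : ∀ s ∈ Icc (0:ℝ) T, m * η ≤ d s := by
    intro s hs
    obtain ⟨_, _, _, h4⟩ := hintt s hs
    have hβs := hβ s hs
    have h5 : β s * pstar s ≤ β s * (α s / β s - η) :=
      mul_le_mul_of_nonneg_left h4 hβs.le
    have h6 : β s * (α s / β s) = α s := by field_simp
    have h7 : m ≤ β s := hβ_ge s hs
    have := hd_eq s hs
    nlinarith [(hp_bdd s hs).1]
  have hd_ub : ∀ s ∈ Icc (0:ℝ) T, d s ≤ A := by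
    intro s hs
    have h1 : 0 ≤ βc s * pstar s :=
      mul_nonneg (le_trans hm_pos.le (hβc_ge s)) (hp_bdd s hs).1
    have h2 : αc s ≤ A := by rw [hαc_eq s hs]; exact hα_le s hs
    simp only [hddef]; linarith
  have hd_nonneg : ∀ s ∈ Icc (0:ℝ) T, 0 ≤ d s := by
    intro s hs
    exact le_trans (mul_nonneg hm_pos.le hη.le) (hd_lb s hs)
  obtain ⟨g, hgdef⟩ : ∃ f : ℝ → ℝ,
      f = fun t => 2 * pstar t - αc t / βc t - 2 * a * ustar t := ⟨_, rfl⟩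
  have hg_meas : Measurable g := by
    rw [hgdef]
    exact ((measurable_const.mul hp_meas).sub
      (hαc_cont.measurable.div hβc_cont.measurable)).sub (measurable_const.mul hu_meas)
  obtain ⟨Cg, hCg⟩ : ∃ x : ℝ, x = 2 * Cp + Cp + 2 * a * Cu := ⟨_, rfl⟩
  have hg_bdd : ∀ t ∈ Icc (0:ℝ) T, |g t| ≤ Cg := by
    intro t ht
    obtain ⟨hp0, hp1⟩ := hp_bdd t ht
    obtain ⟨hu0, hu1⟩ := hu_bdd t ht
    obtain ⟨hr0, hr1⟩ := hratio_bdd t ht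
    have hre : αc t / βc t = α t / β t := by rw [hαc_eq t ht, hβc_eq t ht]
    rw [abs_le]
    simp only [hgdef, hre]
    constructor <;> nlinarith
  obtain ⟨q, hqdef⟩ : ∃ f : ℝ → ℝ, f = fun t => (βc t)⁻¹ + a := ⟨_, rfl⟩
  have hβc_pos : ∀ t, 0 < βc t := fun t => lt_of_lt_of_le hm_pos (hβc_ge t)
  have hq_cont : Continuous q := by
    rw [hqdef]
    exact (hβc_cont.inv₀ (fun t => (hβc_pos t).ne')).add continuous_const
  have hq_nonneg : ∀ t, 0 ≤ q t := fun t => by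
    simp only [hqdef]
    exact add_nonneg (inv_nonneg.2 (hβc_pos t).le) ha.le
  have hq_le : ∀ t, q t ≤ m⁻¹ + a := fun t => by
    simp only [hqdef]
    have := inv_anti₀ hm_pos (hβc_ge t)
    linarith
  -- trajectory integrand: integrability and continuity of the trajectory
  obtain ⟨f₂, hf₂def⟩ : ∃ f₂ : ℝ → ℝ, f₂ = fun s => ustar s - max (α s - β s * pstar s) 0 :=
    ⟨_, rfl⟩
  have hf₂_int : IntegrableOn f₂ (Icc 0 T) := by
    have hm2 : IntegrableOn (fun s => ustar s - max (αc s - βc s * pstar s) 0) (Icc 0 T) := by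
      refine integrableOn_of_bounded_meas measurableSet_Icc measure_Icc_lt_top
        ((hu_meas.sub ((hαc_cont.measurable.sub
          (hβc_cont.measurable.mul hp_meas)).max measurable_const)).aestronglyMeasurable.restrict)
        (C := Cu + A) ?_
      intro x hx
      rw [← hd_apply x]
      obtain ⟨hu0, hu1⟩ := hu_bdd x hx
      have h1 : 0 ≤ max (d x) 0 := le_max_right _ _
      have h2 : max (d x) 0 ≤ A := max_le (hd_ub x hx) hA_pos.le
      rw [abs_le]; constructor <;> nlinarith
    refine hm2.congr_fun ?_ measurableSet_Icc
    intro s hs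
    simp only [hf₂def]
    rw [hαc_eq s hs, hβc_eq s hs]
  have htraj_cont : ContinuousOn (traj α β x₀ ustar pstar) (Icc 0 T) := by
    have heq : traj α β x₀ ustar pstar = fun t => x₀ + ∫ s in (0:ℝ)..t, f₂ s := by
      funext t; simp only [traj, hf₂def]
    rw [heq]
    refine continuousOn_const.add ?_
    have h := intervalIntegral.continuousOn_primitive_interval (a := 0) (b := T)
      (μ := volume) (f := f₂) (by rw [uIcc_of_le hT.le]; exact hf₂_int)
    rwa [uIcc_of_le hT.le] at h
  obtain ⟨H, hHdef⟩ : ∃ H : ℝ → ℝ, H = fun s => holding Ch Cs (traj α β x₀ ustar pstar s) :=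
    ⟨_, rfl⟩
  have hH_cont : ContinuousOn H (Icc 0 T) := by
    rw [hHdef]
    exact (continuous_holding Ch Cs).comp_continuousOn htraj_cont
  have hH_int : IntegrableOn H (Icc 0 T) := hH_cont.integrableOn_Icc
  -- the reward integrand for the optimal pair
  obtain ⟨A₀, hA₀def⟩ : ∃ A₀ : ℝ → ℝ, A₀ = fun s =>
      pstar s * max (α s - β s * pstar s) 0 - a * ustar s ^ 2 - H s := ⟨_, rfl⟩
  have hA₀_int : IntegrableOn A₀ (Icc 0 T) := by
    have hm1 : IntegrableOn
        (fun s => pstar s * max (αc s - βc s * pstar s) 0 - a * ustar s ^ 2) (Icc 0 T) := by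
      refine integrableOn_of_bounded_meas measurableSet_Icc measure_Icc_lt_top
        (((hp_meas.mul ((hαc_cont.measurable.sub
          (hβc_cont.measurable.mul hp_meas)).max measurable_const)).sub
          (measurable_const.mul (hu_meas.pow measurable_const))).aestronglyMeasurable.restrict)
        (C := Cp * A + a * Cu ^ 2) ?_
      intro x hx
      rw [← hd_apply x]
      obtain ⟨hp0, hp1⟩ := hp_bdd x hx
      obtain ⟨hu0, hu1⟩ := hu_bdd x hx
      have h1 : 0 ≤ max (d x) 0 := le_max_right _ _
      have h2 : max (d x) 0 ≤ A := max_le (hd_ub x hx) hA_pos.le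
      have e1 : 0 ≤ pstar x * max (d x) 0 := mul_nonneg hp0 h1
      have e2 : pstar x * max (d x) 0 ≤ Cp * A := mul_le_mul hp1 h2 h1 hCp_pos.le
      have e3 : ustar x ^ 2 ≤ Cu ^ 2 := by nlinarith
      have e4 : a * ustar x ^ 2 ≤ a * Cu ^ 2 := mul_le_mul_of_nonneg_left e3 ha.le
      have e5 : 0 ≤ a * ustar x ^ 2 := by positivity
      rw [abs_le]
      constructor <;> linarith
    refine IntegrableOn.congr_fun (hm1.sub hH_int) ?_ measurableSet_Icc
    intro s hs
    simp only [Pi.sub_apply, hA₀def]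
    rw [hαc_eq s hs, hβc_eq s hs]
  have hA₀_ii : IntervalIntegrable A₀ volume 0 T := by
    rw [intervalIntegrable_iff_integrableOn_Ioc_of_le hT.le]
    exact hA₀_int.mono_set Ioc_subset_Icc_self
  -- the key claim : the set integral of g over any measurable subset of [0,T] vanishes
  have key : ∀ E : Set ℝ, MeasurableSet E → E ⊆ Icc (0:ℝ) T → (∫ t in E, g t) = 0 := by
    intro E hE hEsub
    have hEvol : volume E < ⊤ := lt_of_le_of_lt (measure_mono hEsub) measure_Icc_lt_top
    have hg_intE : IntegrableOn g E :=
      integrableOn_of_bounded_meas hE hEvol hg_meas.aestronglyMeasurable.restrict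
        (fun x hx => hg_bdd x (hEsub hx))
    have hq_intE : IntegrableOn q E :=
      integrableOn_of_bounded_meas hE hEvol hq_cont.aestronglyMeasurable.restrict
        (C := m⁻¹ + a) (fun x _ => by
          rw [abs_of_nonneg (hq_nonneg x)]
          exact hq_le x)
    obtain ⟨Ig, hIgdef⟩ : ∃ x : ℝ, x = ∫ t in E, g t := ⟨_, rfl⟩
    obtain ⟨Iq, hIqdef⟩ : ∃ x : ℝ, x = ∫ t in E, q t := ⟨_, rfl⟩
    have hIq_nonneg : 0 ≤ Iq := by
      rw [hIqdef]; exact setIntegral_nonneg hE (fun t _ => hq_nonneg t)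
    obtain ⟨ε₀, hε₀def⟩ : ∃ x : ℝ, x = min η (η * m) := ⟨_, rfl⟩
    have hε₀_pos : 0 < ε₀ := by
      rw [hε₀def]; exact lt_min hη (mul_pos hη hm_pos)
    have main : ∀ ε : ℝ, |ε| ≤ ε₀ → ε * Ig - ε ^ 2 * Iq ≤ 0 := by
      intro ε hε
      rw [hε₀def] at hε
      have hεη : |ε| ≤ η := le_trans hε (min_le_left _ _)
      have hεηm : |ε| ≤ η * m := le_trans hε (min_le_right _ _)
      obtain ⟨hεa1, hεa2⟩ := abs_le.1 hεη
      obtain ⟨hεb1, hεb2⟩ := abs_le.1 hεηm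
      obtain ⟨uε, huεdef⟩ : ∃ uε : ℝ → ℝ,
          uε = fun t => ustar t + ε * E.indicator (fun _ => (1:ℝ)) t := ⟨_, rfl⟩
      obtain ⟨pε, hpεdef⟩ : ∃ pε : ℝ → ℝ,
          pε = fun t => pstar t - ε * E.indicator (fun t => (βc t)⁻¹) t := ⟨_, rfl⟩
      have huε_meas : Measurable uε := by
        rw [huεdef]
        exact hu_meas.add (measurable_const.mul (measurable_const.indicator hE))
      have hpε_meas : Measurable pε := by
        rw [hpεdef]
        exact hp_meas.sub (measurable_const.mul ((hβc_cont.measurable.inv).indicator hE))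
      have huε_in : ∀ t ∈ E, uε t = ustar t + ε := by
        intro t ht; simp only [huεdef, indicator_of_mem ht]; ring
      have hpε_in : ∀ t ∈ E, pε t = pstar t - ε * (βc t)⁻¹ := by
        intro t ht; simp only [hpεdef, indicator_of_mem ht]
      have huε_out : ∀ t ∉ E, uε t = ustar t := by
        intro t ht; simp only [huεdef, indicator_of_notMem ht]; ring
      have hpε_out : ∀ t ∉ E, pε t = pstar t := by
        intro t ht; simp only [hpεdef, indicator_of_notMem ht]; ring
      have hpert : ∀ t ∈ Icc (0:ℝ) T, |ε * (βc t)⁻¹| ≤ η := by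
        intro t ht
        rw [abs_mul, abs_of_pos (inv_pos.2 (hβc_pos t))]
        have h1 : (βc t)⁻¹ ≤ m⁻¹ := inv_anti₀ hm_pos (hβc_ge t)
        calc |ε| * (βc t)⁻¹ ≤ (η * m) * m⁻¹ :=
              mul_le_mul hεηm h1 (inv_pos.2 (hβc_pos t)).le (by positivity)
          _ = η := by field_simp
      have hmemε : memS T a α β uε pε := by
        refine ⟨huε_meas, hpε_meas, ?_⟩
        intro t ht
        obtain ⟨hi1, hi2, hi3, hi4⟩ := hintt t ht
        by_cases htE : t ∈ E
        · rw [huε_in t htE, hpε_in t htE]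
          obtain ⟨hq1, hq2⟩ := abs_le.1 (hpert t ht)
          exact ⟨by linarith, by linarith, by linarith, by linarith⟩
        · rw [huε_out t htE, hpε_out t htE]
          exact hbounds t ht
      have hβpε : ∀ s ∈ E, β s * pε s = β s * pstar s - ε := by
        intro s hs
        have hsI := hEsub hs
        rw [hpε_in s hs, hβc_eq s hsI]
        have hβ0 : β s ≠ 0 := (hβ s hsI).ne'
        field_simp
      have hd₀ : ∀ s ∈ Icc (0:ℝ) T, m * η ≤ α s - β s * pstar s := by
        intro s hs; rw [hd_eq s hs]; exact hd_lb s hs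
      have hmax1 : ∀ s ∈ Icc (0:ℝ) T, max (α s - β s * pstar s) 0 = α s - β s * pstar s := by
        intro s hs
        exact max_eq_left (le_trans (mul_nonneg hm_pos.le hη.le) (hd₀ s hs))
      have hmax2 : ∀ s ∈ E, max (α s - β s * pε s) 0 = α s - β s * pstar s + ε := by
        intro s hs
        have hsI := hEsub hs
        rw [hβpε s hs]
        have h1 := hd₀ s hsI
        have h2 : -(η * m) ≤ ε := hεb1
        have h3 : α s - (β s * pstar s - ε) = α s - β s * pstar s + ε := by ring
        rw [h3]
        exact max_eq_left (by nlinarith)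
      have hfeq : ∀ s ∈ Icc (0:ℝ) T,
          uε s - max (α s - β s * pε s) 0 = ustar s - max (α s - β s * pstar s) 0 := by
        intro s hs
        by_cases hsE : s ∈ E
        · rw [huε_in s hsE, hmax2 s hsE, hmax1 s hs]; ring
        · rw [huε_out s hsE, hpε_out s hsE]
      have htrajeq : ∀ t ∈ Icc (0:ℝ) T, traj α β x₀ uε pε t = traj α β x₀ ustar pstar t := by
        intro t ht
        unfold traj
        congr 1
        apply intervalIntegral.integral_congr
        intro s hs
        rw [uIcc_of_le ht.1] at hs
        exact hfeq s ⟨hs.1, le_trans hs.2 ht.2⟩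
      obtain ⟨D, hDdef⟩ : ∃ D : ℝ → ℝ,
          D = E.indicator (fun s => ε * g s - ε ^ 2 * q s) := ⟨_, rfl⟩
      have hD_meas : Measurable D := by
        rw [hDdef]
        exact ((measurable_const.mul hg_meas).sub
          (measurable_const.mul hq_cont.measurable)).indicator hE
      have hAeq : ∀ s ∈ Icc (0:ℝ) T,
          pε s * max (α s - β s * pε s) 0 - a * uε s ^ 2
            - holding Ch Cs (traj α β x₀ uε pε s) = A₀ s + D s := by
        intro s hs
        have hHs : holding Ch Cs (traj α β x₀ uε pε s) = H s := by
          simp only [hHdef]; rw [htrajeq s hs]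
        by_cases hsE : s ∈ E
        · have hβs : (0:ℝ) < β s := hβ s hs
          have hβs0 : β s ≠ 0 := hβs.ne'
          rw [hHs, huε_in s hsE, hmax2 s hsE, hpε_in s hsE, hβc_eq s hs]
          simp only [hA₀def, hDdef, indicator_of_mem hsE, hgdef, hqdef, hmax1 s hs,
            hαc_eq s hs, hβc_eq s hs]
          field_simp
          ring
        · rw [hHs, huε_out s hsE, hpε_out s hsE]
          simp only [hA₀def, hDdef, indicator_of_notMem hsE, add_zero]
      have hCg_nn : 0 ≤ Cg := by
        simp only [hCg]; nlinarith
      have hD_int : IntegrableOn D (Icc 0 T) := by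
        refine integrableOn_of_bounded_meas measurableSet_Icc measure_Icc_lt_top
          (hD_meas.aestronglyMeasurable.restrict)
          (C := |ε| * Cg + ε ^ 2 * (m⁻¹ + a)) ?_
        intro x hx
        have h4 : (0:ℝ) ≤ ε ^ 2 * (m⁻¹ + a) :=
          mul_nonneg (sq_nonneg ε) (add_nonneg (inv_nonneg.2 hm_pos.le) ha.le)
        by_cases hxE : x ∈ E
        · simp only [hDdef, indicator_of_mem hxE]
          have h1 : |ε * g x| ≤ |ε| * Cg := by
            rw [abs_mul]
            exact mul_le_mul_of_nonneg_left (hg_bdd x (hEsub hxE)) (abs_nonneg ε)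
          obtain ⟨h1a, h1b⟩ := abs_le.1 h1
          have h2 : 0 ≤ ε ^ 2 * q x := mul_nonneg (sq_nonneg ε) (hq_nonneg x)
          have h3 : ε ^ 2 * q x ≤ ε ^ 2 * (m⁻¹ + a) :=
            mul_le_mul_of_nonneg_left (hq_le x) (sq_nonneg ε)
          rw [abs_le]
          constructor <;> linarith
        · simp only [hDdef, indicator_of_notMem hxE, abs_zero]
          exact add_nonneg (mul_nonneg (abs_nonneg ε) hCg_nn) h4
      have hD_ii : IntervalIntegrable D volume 0 T := by
        rw [intervalIntegrable_iff_integrableOn_Ioc_of_le hT.le]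
        exact hD_int.mono_set Ioc_subset_Icc_self
      have hDint_eq : (∫ s in (0:ℝ)..T, D s) = ε * Ig - ε ^ 2 * Iq := by
        rw [intervalIntegral.integral_of_le hT.le]
        have h1 : (∫ s in Ioc (0:ℝ) T, D s)
            = ∫ s in Ioc (0:ℝ) T ∩ E, (ε * g s - ε ^ 2 * q s) := by
          simp only [hDdef]
          exact setIntegral_indicator hE
        rw [h1]
        have hset : (Ioc (0:ℝ) T ∩ E : Set ℝ) =ᵐ[volume] E := by
          rw [MeasureTheory.ae_eq_set]
          constructor
          · refine measure_mono_null ?_ (measure_empty)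
            intro x hx
            exact absurd hx.1.2 (fun h => hx.2 h)
          · refine measure_mono_null (t := {(0:ℝ)}) ?_ (measure_singleton 0)
            intro x hx
            have hxI := hEsub hx.1
            have hnI : x ∉ Ioc (0:ℝ) T := fun h => hx.2 ⟨h, hx.1⟩
            have : ¬ (0 < x) := fun h => hnI ⟨h, hxI.2⟩
            simp [le_antisymm (not_lt.1 this) hxI.1]
        rw [setIntegral_congr_set hset]
        rw [integral_sub (hg_intE.const_mul ε) (hq_intE.const_mul (ε ^ 2)),
          integral_const_mul, integral_const_mul, hIgdef, hIqdef]
      have hJ : Jobj T a σ Ch Cs ChT CsT α β x₀ uε pε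
          = Jobj T a σ Ch Cs ChT CsT α β x₀ ustar pstar + (ε * Ig - ε ^ 2 * Iq) := by
        unfold Jobj
        have h2 : (∫ s in (0:ℝ)..T, (pε s * max (α s - β s * pε s) 0 - a * uε s ^ 2
            - holding Ch Cs (traj α β x₀ uε pε s)))
            = (∫ s in (0:ℝ)..T, A₀ s) + (ε * Ig - ε ^ 2 * Iq) := by
          rw [intervalIntegral.integral_congr (g := fun s => A₀ s + D s)
            (fun s hs => by rw [uIcc_of_le hT.le] at hs; exact hAeq s hs)]
          rw [intervalIntegral.integral_add hA₀_ii hD_ii, hDint_eq]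
        rw [h2, htrajeq T (right_mem_Icc.2 hT.le)]
        have himg : traj α β x₀ uε pε '' Icc 0 T = traj α β x₀ ustar pstar '' Icc 0 T :=
          image_congr htrajeq
        rw [himg]
        simp only [hA₀def, hHdef]
        ring
      have hle := hopt uε pε hmemε
      rw [hJ] at hle
      linarith
    -- conclude Ig = 0
    have habs : ∀ ε : ℝ, 0 < ε → ε ≤ ε₀ → |Ig| ≤ ε * Iq := by
      intro ε hεpos hεle
      have h1 := main ε (by rw [abs_of_pos hεpos]; exact hεle)
      have h2 := main (-ε) (by rw [abs_neg, abs_of_pos hεpos]; exact hεle)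
      rw [abs_le]
      constructor <;> nlinarith
    have hsmall : ∀ δ : ℝ, 0 < δ → |Ig| ≤ δ := by
      intro δ hδ
      have hIq1 : 0 < Iq + 1 := by linarith
      obtain ⟨ε, hεdef⟩ : ∃ x : ℝ, x = min ε₀ (δ / (Iq + 1)) := ⟨_, rfl⟩
      have hεpos : 0 < ε := by
        rw [hεdef]; exact lt_min hε₀_pos (div_pos hδ hIq1)
      have h := habs ε hεpos (by rw [hεdef]; exact min_le_left _ _)
      have h2 : ε ≤ δ / (Iq + 1) := by rw [hεdef]; exact min_le_right _ _
      have h3 : ε * Iq ≤ (δ / (Iq + 1)) * Iq :=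
        mul_le_mul_of_nonneg_right h2 hIq_nonneg
      have h4 : (δ / (Iq + 1)) * Iq ≤ δ := by
        rw [div_mul_eq_mul_div, div_le_iff₀ hIq1]
        nlinarith
      linarith
    have : |Ig| ≤ 0 := le_of_forall_pos_le_add (by intro δ hδ; simpa using hsmall δ hδ)
    have := abs_nonneg Ig
    have hIg0 : Ig = 0 := abs_eq_zero.1 (le_antisymm ‹|Ig| ≤ 0› (abs_nonneg Ig))
    rw [← hIgdef]
    exact hIg0
  -- from the key claim to the a.e. statement
  haveI hfin : IsFiniteMeasure (volume.restrict (Icc (0:ℝ) T)) :=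
    ⟨by rw [Measure.restrict_apply_univ]; exact measure_Icc_lt_top⟩
  have hg0 : g =ᵐ[volume.restrict (Icc (0:ℝ) T)] 0 := by
    refine ae_eq_zero_of_forall_setIntegral_eq_of_sigmaFinite ?_ ?_
    · intro s hs _
      rw [IntegrableOn, Measure.restrict_restrict hs]
      exact integrableOn_of_bounded_meas (hs.inter measurableSet_Icc)
        (lt_of_le_of_lt (measure_mono inter_subset_right) measure_Icc_lt_top)
        hg_meas.aestronglyMeasurable.restrict (fun x hx => hg_bdd x hx.2)
    · intro s hs _
      rw [Measure.restrict_restrict hs]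
      exact key (s ∩ Icc 0 T) (hs.inter measurableSet_Icc) inter_subset_right
  filter_upwards [hg0, ae_restrict_mem measurableSet_Icc] with t hgt ht
  have hβt : 0 < β t := hβ t ht
  have hg0t : 2 * pstar t - α t / β t - 2 * a * ustar t = 0 := by
    have h := hgt
    simp only [hgdef, Pi.zero_apply] at h
    rwa [hαc_eq t ht, hβc_eq t ht] at h
  have hdiv : α t / (2 * β t) = (α t / β t) / 2 := by
    rw [div_div, mul_comm]
  linarith
end
end

section
/- Derivative of the running supremum of a C¹ function: let a < b and let g : [a,b] → ℝ be continuously differentiable. Define Y(t) := sup_{s∈[a,t]} g(s). Then Y is nondecreasing and Lipschitz continuous on [a,b], and for Lebesgue-almost every t ∈ (a,b) one has Y'(t) = g'(t) if g(t) = Y(t) and Y'(t) = 0 if g(t) < Y(t); equivalently, for almost every t ∈ (a,b), Y'(t) = g'(t) · 1{ g(t) ≥ Y(t) and g'(t) ≥ 0 }. -/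
open MeasureTheory Set Filter Topology
open scoped NNReal

noncomputable section

/-- The running supremum of `g` over `[a, t]`. -/
def runSup (g : ℝ → ℝ) (a t : ℝ) : ℝ := sSup (g '' Icc a t)

namespace RunSupAux

variable {a b : ℝ} {g : ℝ → ℝ}

lemma nonempty (ha : a ≤ t) : (g '' Icc a t).Nonempty :=
  ⟨g a, mem_image_of_mem g (left_mem_Icc.2 ha)⟩

lemma bdd (hg : ContinuousOn g (Icc a b)) (ht : t ∈ Icc a b) :
    BddAbove (g '' Icc a t) :=
  isCompact_Icc.bddAbove_image (hg.mono (Icc_subset_Icc_right ht.2))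

lemma le_runSup (hg : ContinuousOn g (Icc a b)) (ht : t ∈ Icc a b)
    (hs : s ∈ Icc a t) : g s ≤ runSup g a t :=
  le_csSup (bdd hg ht) (mem_image_of_mem g hs)

lemma mono (hg : ContinuousOn g (Icc a b)) : MonotoneOn (runSup g a) (Icc a b) :=
  fun x hx y hy hxy =>
    csSup_le_csSup (bdd hg hy) (nonempty hx.1)
      (image_mono (Icc_subset_Icc_right hxy))

lemma runSup_le_max (hg : ContinuousOn g (Icc a b)) (ht : t ∈ Icc a b)
    (hu : u ∈ Icc a b) (htu : t ≤ u) {c : ℝ} (hc : ∀ s ∈ Icc t u, g s ≤ c) :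
    runSup g a u ≤ max (runSup g a t) c := by
  apply csSup_le (nonempty (ht.1.trans htu))
  rintro _ ⟨s, hs, rfl⟩
  rcases le_or_gt s t with h | h
  · exact le_max_of_le_left (le_runSup hg ht ⟨hs.1, h⟩)
  · exact le_max_of_le_right (hc s ⟨h.le, hs.2⟩)

end RunSupAux

/-- derivative of the running supremum of a C¹ function: the running
supremum `Y(t) = sup_{s∈[a,t]} g(s)` is nondecreasing and Lipschitz on `[a,b]`, and
for a.e. `t ∈ (a,b)`: `Y'(t) = g'(t)` where `g(t) = Y(t)`, `Y'(t) = 0` where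
`g(t) < Y(t)`; equivalently `Y'(t) = g'(t)·1{g(t) ≥ Y(t) ∧ g'(t) ≥ 0}`. -/
theorem runSup_deriv
    (a b : ℝ) (hab : a < b) (g : ℝ → ℝ) (hg : ContDiffOn ℝ 1 g (Icc a b)) :
    MonotoneOn (runSup g a) (Icc a b) ∧
    (∃ K : ℝ≥0, LipschitzOnWith K (runSup g a) (Icc a b)) ∧
    ∀ᵐ t ∂(volume.restrict (Ioo a b)),
      (g t = runSup g a t → HasDerivAt (runSup g a) (derivWithin g (Icc a b) t) t) ∧
      (g t < runSup g a t → HasDerivAt (runSup g a) 0 t) ∧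
      HasDerivAt (runSup g a)
        (derivWithin g (Icc a b) t *
          (if runSup g a t ≤ g t ∧ 0 ≤ derivWithin g (Icc a b) t then 1 else 0)) t := by
  have hgc : ContinuousOn g (Icc a b) := hg.continuousOn
  set Y := runSup g a with hYdef
  set g' := fun t => derivWithin g (Icc a b) t with hg'def
  have hmono : MonotoneOn Y (Icc a b) := RunSupAux.mono hgc
  have hgtle : ∀ t ∈ Icc a b, g t ≤ Y t := fun t ht =>
    RunSupAux.le_runSup hgc ht (right_mem_Icc.2 ht.1)
  -- derivative facts
  have hdiffOn : DifferentiableOn ℝ g (Icc a b) := hg.differentiableOn one_ne_zero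
  have hg'cont : ContinuousOn g' (Icc a b) :=
    hg.continuousOn_derivWithin (uniqueDiffOn_Icc hab) le_rfl
  have hnhds : ∀ t ∈ Ioo a b, Icc a b ∈ 𝓝 t := fun t ht => Icc_mem_nhds ht.1 ht.2
  have hgdev : ∀ t ∈ Ioo a b, HasDerivAt g (g' t) t := by
    intro t ht
    have h1 := (hdiffOn t (Ioo_subset_Icc_self ht)).differentiableAt (hnhds t ht)
    have h2 : g' t = deriv g t := derivWithin_of_mem_nhds (hnhds t ht)
    rw [h2]
    exact h1.hasDerivAt
  -- Lipschitz constant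
  obtain ⟨C, hC⟩ := isCompact_Icc.exists_bound_of_continuousOn hg'cont
  set K : ℝ≥0 := C.toNNReal with hKdef
  have hKg : LipschitzOnWith K g (Icc a b) := by
    apply (convex_Icc a b).lipschitzOnWith_of_nnnorm_derivWithin_le hdiffOn
    intro x hx
    rw [← NNReal.coe_le_coe, coe_nnnorm, hKdef, Real.coe_toNNReal']
    exact (hC x hx).trans (le_max_left _ _)
  have hKY : LipschitzOnWith K Y (Icc a b) := by
    have key : ∀ x ∈ Icc a b, ∀ y ∈ Icc a b, x ≤ y → Y y ≤ Y x + K * (y - x) := by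
      intro x hx y hy hxy
      refine csSup_le (RunSupAux.nonempty (hx.1.trans hxy)) ?_
      rintro _ ⟨s, hs, rfl⟩
      rcases le_or_gt s x with h | h
      · have h1 : g s ≤ Y x := RunSupAux.le_runSup hgc hx ⟨hs.1, h⟩
        have h2 : (0:ℝ) ≤ K * (y - x) := mul_nonneg K.coe_nonneg (by linarith)
        linarith
      · have hsab : s ∈ Icc a b := ⟨hs.1, hs.2.trans hy.2⟩
        have h1 : dist (g s) (g x) ≤ K * dist s x := hKg.dist_le_mul s hsab x hx
        have h2 : g x ≤ Y x := hgtle x hx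
        have h3 : dist s x ≤ y - x := by
          rw [Real.dist_eq, abs_of_nonneg (by linarith)]
          linarith [hs.2]
        have h4 : g s - g x ≤ K * dist s x := by
          have := le_abs_self (g s - g x)
          rw [Real.dist_eq] at h1
          linarith
        have h5 : (K:ℝ) * dist s x ≤ K * (y - x) :=
          mul_le_mul_of_nonneg_left h3 (by positivity)
        linarith
    rw [lipschitzOnWith_iff_dist_le_mul]
    intro x hx y hy
    rcases le_total x y with h | h
    · rw [Real.dist_eq, Real.dist_eq, abs_of_nonpos (by linarith [hmono hx hy h]),
        abs_of_nonpos (by linarith)]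
      have := key x hx y hy h
      linarith
    · rw [Real.dist_eq, Real.dist_eq, abs_of_nonneg (by linarith [hmono hy hx h]),
        abs_of_nonneg (by linarith)]
      have := key y hy x hx h
      linarith
  -- global Lipschitz extension via projIcc
  set Yt : ℝ → ℝ := fun t => Y (↑(projIcc a b hab.le t)) with hYtdef
  have hYtLip : LipschitzWith K Yt := by
    have := (hKY.to_restrict).comp (LipschitzWith.projIcc hab.le)
    rw [mul_one] at this
    exact this
  have hYteq : ∀ t ∈ Ioo a b, Yt =ᶠ[𝓝 t] Y := by
    intro t ht
    filter_upwards [Ioo_mem_nhds ht.1 ht.2] with u hu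
    simp [hYtdef, projIcc_of_mem hab.le (Ioo_subset_Icc_self hu)]
  -- (A) local constancy where g t < Y t
  have hA : ∀ t ∈ Ioo a b, g t < Y t → HasDerivAt Y 0 t := by
    intro t ht hlt
    set c := (g t + Y t) / 2 with hcdef
    have hc1 : g t < c := by rw [hcdef]; linarith
    have hc2 : c < Y t := by rw [hcdef]; linarith
    have hcont : ContinuousAt g t :=
      (hgc t (Ioo_subset_Icc_self ht)).continuousAt (hnhds t ht)
    have hev0 : ∀ᶠ u in 𝓝 t, g u < c := hcont.preimage_mem_nhds (Iio_mem_nhds hc1)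
    have hev : ∀ᶠ u in 𝓝 t, g u < c ∧ u ∈ Ioo a b :=
      hev0.and (Ioo_mem_nhds ht.1 ht.2)
    obtain ⟨δ, hδpos, hδ⟩ := Metric.eventually_nhds_iff.1 hev
    have hconst : ∀ u, dist u t < δ → Y u = Y t := by
      intro u hu
      obtain ⟨hguc, huab⟩ := hδ hu
      have huIcc : u ∈ Icc a b := Ioo_subset_Icc_self huab
      have htIcc : t ∈ Icc a b := Ioo_subset_Icc_self ht
      rcases le_total u t with h | h
      · have h1 : Y u ≤ Y t := hmono huIcc htIcc h
        have hbet : ∀ s ∈ Icc u t, g s ≤ c := by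
          intro s hs
          have : dist s t < δ := by
            rw [Real.dist_eq, abs_of_nonpos (by linarith [hs.2])]
            rw [Real.dist_eq, abs_of_nonpos (by linarith)] at hu
            linarith [hs.1]
          exact (hδ this).1.le
        have h2 : Y t ≤ max (Y u) c :=
          RunSupAux.runSup_le_max hgc huIcc htIcc h hbet
        rcases le_max_iff.1 h2 with h3 | h3
        · linarith
        · linarith
      · have h1 : Y t ≤ Y u := hmono htIcc huIcc h
        have hbet : ∀ s ∈ Icc t u, g s ≤ c := by
          intro s hs
          have : dist s t < δ := by
            rw [Real.dist_eq, abs_of_nonneg (by linarith [hs.1])]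
            rw [Real.dist_eq, abs_of_nonneg (by linarith)] at hu
            linarith [hs.2]
          exact (hδ this).1.le
        have h2 : Y u ≤ max (Y t) c :=
          RunSupAux.runSup_le_max hgc htIcc huIcc h hbet
        rcases le_max_iff.1 h2 with h3 | h3
        · linarith
        · linarith
    have hYconst : Y =ᶠ[𝓝 t] fun _ => Y t := by
      filter_upwards [Metric.ball_mem_nhds t hδpos] with u hu
      exact hconst u (by simpa [Metric.mem_ball] using hu)
    exact (hasDerivAt_const t (Y t)).congr_of_eventuallyEq hYconst
  -- slope of g tendsto
  have hslopeg : ∀ t ∈ Ioo a b, ∀ s : Set ℝ, s ⊆ {t}ᶜ →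
      Filter.Tendsto (slope g t) (𝓝[s] t) (𝓝 (g' t)) := by
    intro t ht s hs
    exact (hasDerivAt_iff_tendsto_slope.1 (hgdev t ht)).mono_left (nhdsWithin_mono _ hs)
  -- (B) nonneg derivative where g t = Y t
  have hB : ∀ t ∈ Ioo a b, g t = Y t → 0 ≤ g' t := by
    intro t ht heq
    have hten : Filter.Tendsto (slope g t) (𝓝[<] t) (𝓝 (g' t)) :=
      hslopeg t ht _ (fun x hx => ne_of_lt hx)
    apply ge_of_tendsto hten
    filter_upwards [Ioo_mem_nhdsLT_of_mem ⟨ht.1, le_refl t⟩] with u hu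
    have hgu : g u ≤ Y t :=
      RunSupAux.le_runSup hgc (Ioo_subset_Icc_self ht) ⟨hu.1.le, hu.2.le⟩
    rw [slope_def_field]
    exact div_nonneg_of_nonpos (by linarith [heq]) (by linarith [hu.2])
  -- (C) slope of Y from the right tends to g' t where g t = Y t
  have hC2 : ∀ t ∈ Ioo a b, g t = Y t →
      Filter.Tendsto (slope Y t) (𝓝[>] t) (𝓝 (g' t)) := by
    intro t ht heq
    have h0 : 0 ≤ g' t := hB t ht heq
    have hgslope : Filter.Tendsto (slope g t) (𝓝[>] t) (𝓝 (g' t)) :=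
      hslopeg t ht _ (fun x hx => (ne_of_gt hx))
    rw [tendsto_order]
    constructor
    · intro c hc
      filter_upwards [hgslope.eventually (eventually_gt_nhds hc),
        Ioo_mem_nhdsGT_of_mem ⟨le_refl t, ht.2⟩] with u h1 h2
      have hYu : g u ≤ Y u := hgtle u ⟨(ht.1.trans h2.1).le, h2.2.le⟩
      have hpos : 0 < u - t := by linarith [h2.1]
      have : slope g t u ≤ slope Y t u := by
        rw [slope_def_field, slope_def_field]
        exact (div_le_div_iff_of_pos_right hpos).2 (by linarith [heq])
      linarith
    · intro c hc
      set ε := (c - g' t) / 2 with hεdef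
      have hε : 0 < ε := by rw [hεdef]; linarith
      have hg'ct : ContinuousWithinAt g' (Icc a b) t :=
        hg'cont t (Ioo_subset_Icc_self ht)
      have hev : ∀ᶠ s in 𝓝[Icc a b] t, g' s < g' t + ε :=
        hg'ct (Iio_mem_nhds (by linarith))
      obtain ⟨δ, hδpos, hδ⟩ := Metric.mem_nhdsWithin_iff.1 hev
      have hub : t < min (t + δ) b := lt_min (by linarith) ht.2
      filter_upwards [Ioo_mem_nhdsGT_of_mem ⟨le_refl t, hub⟩] with u hu
      have hu1 : t < u := hu.1
      have hu2 : u < t + δ := lt_of_lt_of_le hu.2 (min_le_left _ _)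
      have hub2 : u < b := lt_of_lt_of_le hu.2 (min_le_right _ _)
      have hIccsub : Icc t u ⊆ Icc a b := Icc_subset_Icc ht.1.le hub2.le
      have hg'bound : ∀ s ∈ Icc t u, g' s < g' t + ε := by
        intro s hs
        apply hδ
        constructor
        · rw [Metric.mem_ball, Real.dist_eq, abs_of_nonneg (by linarith [hs.1])]
          linarith [hs.2]
        · exact hIccsub hs
      have hmonoφ : MonotoneOn (fun x => (g' t + ε) * x - g x) (Icc t u) := by
        apply monotoneOn_of_deriv_nonneg (convex_Icc t u)
        · exact ((continuous_const.mul continuous_id).continuousOn).sub (hgc.mono hIccsub)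
        · rw [interior_Icc]
          intro s hs
          have hs' : s ∈ Ioo a b := ⟨ht.1.trans hs.1, hs.2.trans hub2⟩
          exact (((hasDerivAt_id s).const_mul (g' t + ε)).sub
            (hgdev s hs')).differentiableAt.differentiableWithinAt
        · rw [interior_Icc]
          intro s hs
          have hs' : s ∈ Ioo a b := ⟨ht.1.trans hs.1, hs.2.trans hub2⟩
          have hd : HasDerivAt (fun x => (g' t + ε) * x - g x) ((g' t + ε) * 1 - g' s) s :=
            ((hasDerivAt_id s).const_mul (g' t + ε)).sub (hgdev s hs')
          rw [hd.deriv]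
          have := hg'bound s ⟨hs.1.le, hs.2.le⟩
          linarith
      have hkey : ∀ s ∈ Icc t u, g s ≤ g t + (g' t + ε) * (u - t) := by
        intro s hs
        have hφ := hmonoφ (left_mem_Icc.2 (le_of_lt hu1)) hs hs.1
        simp only at hφ
        have hmul : (g' t + ε) * (s - t) ≤ (g' t + ε) * (u - t) :=
          mul_le_mul_of_nonneg_left (by linarith [hs.2]) (by linarith)
        nlinarith [hφ]
      have hYu : Y u ≤ Y t + (g' t + ε) * (u - t) := by
        have hmax := RunSupAux.runSup_le_max hgc (Ioo_subset_Icc_self ht)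
          ⟨(ht.1.trans hu1).le, hub2.le⟩ hu1.le hkey
        have hnn : 0 ≤ (g' t + ε) * (u - t) := by
          apply mul_nonneg (by linarith) (by linarith)
        rw [← hYdef] at hmax
        rcases le_max_iff.1 hmax with h | h
        · linarith
        · rw [heq] at h; linarith
      rw [slope_def_field, div_lt_iff₀ (by linarith : (0:ℝ) < u - t)]
      have hεc : g' t + ε < c := by rw [hεdef]; linarith
      nlinarith [mul_lt_mul_of_pos_right hεc (show (0:ℝ) < u - t by linarith)]
  -- assemble
  refine ⟨hmono, ⟨K, hKY⟩, ?_⟩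
  have hae1 : ∀ᵐ t ∂(volume.restrict (Ioo a b)), DifferentiableAt ℝ Yt t :=
    ae_restrict_of_ae (hYtLip.ae_differentiableAt)
  have hae2 : ∀ᵐ t ∂(volume.restrict (Ioo a b)), t ∈ Ioo a b :=
    ae_restrict_mem measurableSet_Ioo
  filter_upwards [hae1, hae2] with t hdYt ht
  have hYd : HasDerivAt Y (deriv Yt t) t :=
    (hdYt.hasDerivAt).congr_of_eventuallyEq ((hYteq t ht).symm)
  have hb1 : g t = Y t → HasDerivAt Y (g' t) t := by
    intro heq
    have h1 : Filter.Tendsto (slope Y t) (𝓝[>] t) (𝓝 (deriv Yt t)) :=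
      (hasDerivAt_iff_tendsto_slope.1 hYd).mono_left
        (nhdsWithin_mono _ fun x hx => (ne_of_gt hx))
    have h2 := hC2 t ht heq
    have h3 : deriv Yt t = g' t := tendsto_nhds_unique h1 h2
    exact h3 ▸ hYd
  have hb2 : g t < Y t → HasDerivAt Y 0 t := hA t ht
  refine ⟨hb1, hb2, ?_⟩
  rcases (hgtle t (Ioo_subset_Icc_self ht)).lt_or_eq with hlt | heqt
  · rw [if_neg (fun h => absurd h.1 (not_le.2 hlt)), mul_zero]
    exact hb2 hlt
  · rw [if_pos ⟨heqt.ge, hB t ht heqt⟩, mul_one]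
    exact hb1 heqt
end
end
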